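/- arXiv:2207.03972 — 5 statements merged into one kernel-verified Lean document; each statement's English description precedes it below -/
import Mathlib

section
/- In the group H = ⟨a, b, t ∣ t·b·t⁻¹ = b, t·a·t⁻¹ = b·a⟩, for every natural number n one has bⁿ = ⁅tⁿ, a⁆ = tⁿ·a·t⁻ⁿ·a⁻¹. In particular, every power bⁿ of b is a commutator in H. -/
/-- Generators of `H`: `a = 0`, `b = 1`, `t = 2`.
Relators: `t·b·t⁻¹·b⁻¹` and `t·a·t⁻¹·a⁻¹·b⁻¹`. -/
def hRels : Set (FreeGroup (Fin 3)) :=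
  { FreeGroup.of (2 : Fin 3) * FreeGroup.of (1 : Fin 3) * (FreeGroup.of (2 : Fin 3))⁻¹ *
      (FreeGroup.of (1 : Fin 3))⁻¹,
    FreeGroup.of (2 : Fin 3) * FreeGroup.of (0 : Fin 3) * (FreeGroup.of (2 : Fin 3))⁻¹ *
      (FreeGroup.of (0 : Fin 3))⁻¹ * (FreeGroup.of (1 : Fin 3))⁻¹ }

/-- The group `H = ⟨a, b, t ∣ t·b·t⁻¹ = b, t·a·t⁻¹ = b·a⟩`. -/
abbrev HGrp : Type := PresentedGroup hRels

/-- The image of the generator `a` in `H`. -/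
def aH : HGrp := PresentedGroup.of 0
/-- The image of the generator `b` in `H`. -/
def bH : HGrp := PresentedGroup.of 1
/-- The image of the generator `t` in `H`. -/
def tH : HGrp := PresentedGroup.of 2

open scoped commutatorElement

lemma rel1 : tH * bH * tH⁻¹ * bH⁻¹ = 1 := by
  have : (QuotientGroup.mk (FreeGroup.of (2 : Fin 3) * FreeGroup.of (1 : Fin 3) *
      (FreeGroup.of (2 : Fin 3))⁻¹ * (FreeGroup.of (1 : Fin 3))⁻¹) : HGrp) = 1 := by
    rw [QuotientGroup.eq_one_iff]
    exact Subgroup.subset_normalClosure (by left; rfl)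
  exact this

lemma rel2 : tH * aH * tH⁻¹ * aH⁻¹ * bH⁻¹ = 1 := by
  have : (QuotientGroup.mk (FreeGroup.of (2 : Fin 3) * FreeGroup.of (0 : Fin 3) *
      (FreeGroup.of (2 : Fin 3))⁻¹ * (FreeGroup.of (0 : Fin 3))⁻¹ *
      (FreeGroup.of (1 : Fin 3))⁻¹) : HGrp) = 1 := by
    rw [QuotientGroup.eq_one_iff]
    exact Subgroup.subset_normalClosure (by right; rfl)
  exact this

lemma tb_comm : Commute tH bH := by
  show tH * bH = bH * tH
  calc tH * bH = (tH * bH * tH⁻¹ * bH⁻¹) * (bH * tH) := by group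
    _ = bH * tH := by rw [rel1]; group

lemma ta_conj : tH * aH * tH⁻¹ = bH * aH := by
  calc tH * aH * tH⁻¹ = (tH * aH * tH⁻¹ * aH⁻¹ * bH⁻¹) * (bH * aH) := by group
    _ = bH * aH := by rw [rel2]; group

lemma key (m : ℕ) : tH ^ m * aH * (tH ^ m)⁻¹ = bH ^ m * aH := by
  induction m with
  | zero => simp
  | succ k ih =>
    have hc : tH ^ k * bH = bH * tH ^ k := (tb_comm.pow_left k).eq
    calc tH ^ (k + 1) * aH * (tH ^ (k + 1))⁻¹
        = tH ^ k * (tH * aH * tH⁻¹) * (tH ^ k)⁻¹ := by rw [pow_succ]; group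
      _ = tH ^ k * (bH * aH) * (tH ^ k)⁻¹ := by rw [ta_conj]
      _ = (tH ^ k * bH) * (tH ^ k)⁻¹ * (tH ^ k * aH * (tH ^ k)⁻¹) := by group
      _ = (bH * tH ^ k) * (tH ^ k)⁻¹ * (bH ^ k * aH) := by rw [hc, ih]
      _ = bH ^ (k + 1) * aH := by rw [pow_succ]; group

/-- In `H = ⟨a, b, t ∣ t·b·t⁻¹ = b, t·a·t⁻¹ = b·a⟩`, for every `n : ℕ` one has
`bⁿ = ⁅tⁿ, a⁆ = tⁿ·a·t⁻ⁿ·a⁻¹`; in particular every power of `b` is a commutator. -/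
theorem b_pow_eq_commutator (n : ℕ) :
    bH ^ n = ⁅tH ^ n, aH⁆ ∧ bH ^ n = tH ^ n * aH * (tH ^ n)⁻¹ * aH⁻¹ := by
  have h : bH ^ n = tH ^ n * aH * (tH ^ n)⁻¹ * aH⁻¹ := by rw [key n]; group
  exact ⟨by rw [h]; rfl, h⟩
end

section
/- There exists a function π : H → ℤ such that (i) π(t^p · b^q · ι(w)) = q for all p, q ∈ ℤ and all w ∈ F₂ not beginning with b^{±1}, and (ii) π is 1-Lipschitz with respect to the word metric on the generating set {a, b, t}: for every h ∈ H and every s ∈ {a, b, t, a⁻¹, b⁻¹, t⁻¹} ⊆ H, |π(h·s) − π(h)| ≤ 1. -/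
/-- The free group on two generators `a = 0`, `b = 1`. -/
abbrev F₂ : Type := FreeGroup (Fin 2)

/-- `w ∈ F₂` does not begin with `b` or `b⁻¹`: the first letter of its reduced word
(if any) is not the generator `b = 1`. -/
def NoLeadB (w : F₂) : Prop := ∀ l ∈ w.toWord.head?, l.1 ≠ (1 : Fin 2)

/-- The homomorphism `ι : F₂ →* H` sending the generators `a`, `b` of `F₂` to the
elements `a`, `b` of `H`. -/
def ι : F₂ →* HGrp := FreeGroup.lift (fun i => if i = 0 then aH else bH)

/-!
Sending `a, b` to the generators of `F₂` and `t` to the generator of `ℤ` maps `H` to `F₂ ⋊ ℤ`,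
where `t` acts by `φ : a ↦ ba, b ↦ b`. Writing the image of `h` as `t^p · u` with `u ∈ F₂`, let
`π h` be the exponent of the leading `b`-run of the reduced word of `u`. Right multiplication by
`a^{±1}` or `b^{±1}` appends a letter to `u`, which changes the leading run only when `u` is a
power of `b`. Right multiplication by `t^{±1}` replaces `u` by `φ^{∓1} u`, and the leading
exponent of `φ u` is that of `u` or one more, by induction on `u` letter by letter: `φ` fixes the
powers of `b` and maps nothing else to them, so the extra `b` of `φ a = ba` reaches the leading
run only right after a power of `b`.
-/

namespace FreeGroup

variable {α : Type*}

theorem inv_mk_singleton (a : α) (b : Bool) : (mk [(a, b)])⁻¹ = mk [(a, !b)] := by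
  rw [inv_mk]; rfl

theorem mk_singleton_eq_zpow (a : α) (b : Bool) :
    mk [(a, b)] = of a ^ (if b then 1 else -1 : ℤ) := by
  cases b
  · rw [if_neg Bool.false_ne_true, zpow_neg_one, of, inv_mk_singleton, Bool.not_true]
  · rw [if_pos rfl, zpow_one, of]

theorem mk_singleton_mem_zpowers (a : α) (b : Bool) : mk [(a, b)] ∈ Subgroup.zpowers (of a) := by
  rw [mk_singleton_eq_zpow]
  exact Subgroup.zpow_mem_zpowers _ _

variable [DecidableEq α]

theorem toWord_mk_singleton_mul (x : α × Bool) (u : FreeGroup α) :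
    (mk [x] * u).toWord =
      if u.toWord.head? = some (x.1, !x.2) then u.toWord.tail else x :: u.toWord := by
  rw [← mk_toWord (x := u), mul_mk, toWord_mk, List.singleton_append, reduce.cons,
    ← toWord_mk, mk_toWord]
  rcases u.toWord with _ | ⟨y, L⟩
  · rfl
  · obtain ⟨x1, x2⟩ := x
    obtain ⟨y1, y2⟩ := y
    cases x2 <;> cases y2 <;> simp [eq_comm]

theorem toWord_mul_mk_singleton (u : FreeGroup α) (x : α × Bool) :
    (u * mk [x]).toWord = u.toWord ++ [x] ∨ (u * mk [x]).toWord = u.toWord.dropLast := by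
  by_cases hx : IsReduced (u.toWord ++ [x])
  · left
    rw [← mk_toWord (x := u), mul_mk, toWord_mk, hx.reduce_eq, mk_toWord]
  · right
    rw [IsReduced, List.isChain_append] at hx
    push Not at hx
    obtain ⟨y, hy, z, hz, hyz⟩ := hx isReduced_toWord (List.isChain_singleton x)
    obtain rfl : z = x := by simpa [eq_comm] using hz
    obtain rfl : y = (z.1, !z.2) := Prod.ext hyz.1 (Bool.eq_not.mpr hyz.2)
    have hu : u * mk [z] = mk u.toWord.dropLast := by
      rw [← inv_inv (mk [z]), inv_mk_singleton, ← div_eq_mul_inv, div_eq_iff_eq_mul, mul_mk,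
        List.dropLast_append_getLast? _ hy, mk_toWord]
    have hred : IsReduced u.toWord.dropLast :=
      isReduced_toWord.infix (List.dropLast_prefix _).isInfix
    rw [hu, toWord_mk, hred.reduce_eq]

theorem head?_toWord_mul_mk_singleton {u : FreeGroup α} (hu : u ≠ 1) (x : α × Bool) :
    u * mk [x] = 1 ∨ (u * mk [x]).toWord.head? = u.toWord.head? := by
  have hne : u.toWord ≠ [] := by rwa [Ne, toWord_eq_nil_iff]
  rcases toWord_mul_mk_singleton u x with h | h
  · right
    rw [h, List.head?_append_of_ne_nil _ hne]
  · rcases hL : u.toWord with _ | ⟨y, _ | ⟨z, L⟩⟩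
    · exact absurd hL hne
    · left
      rwa [hL, List.dropLast_singleton, toWord_eq_nil_iff] at h
    · right
      rw [h, hL, List.dropLast_cons_cons, List.head?_cons, List.head?_cons]

def leadingExpList (j : α) : List (α × Bool) → ℤ
  | [] => 0
  | x :: L => if x.1 = j then leadingExpList j L + (if x.2 then 1 else -1) else 0

def leadingExp (j : α) (u : FreeGroup α) : ℤ := leadingExpList j u.toWord

variable {j : α}

theorem leadingExp_eq_zero {u : FreeGroup α} (hu : ∀ x ∈ u.toWord.head?, x.1 ≠ j) :
    leadingExp j u = 0 := by
  unfold leadingExp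
  rcases h : u.toWord with _ | ⟨x, L⟩
  · rfl
  · simp [leadingExpList, hu x (by simp [h])]

theorem leadingExp_mk_singleton_mul (b : Bool) (u : FreeGroup α) :
    leadingExp j (mk [(j, b)] * u) = leadingExp j u + (if b then 1 else -1) := by
  unfold leadingExp
  rw [toWord_mk_singleton_mul]
  rcases u.toWord with _ | ⟨⟨i, c⟩, L⟩
  · simp [leadingExpList]
  · by_cases hi : i = j
    · subst hi
      cases b <;> cases c <;> simp [leadingExpList]
    · simp [leadingExpList, hi]

theorem leadingExp_zpow_mul (k : ℤ) (u : FreeGroup α) :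
    leadingExp j (of j ^ k * u) = k + leadingExp j u := by
  induction k using Int.induction_on generalizing u with
  | zero => simp
  | succ k ih =>
    rw [zpow_add_one, mul_assoc, ih, of, leadingExp_mk_singleton_mul]
    simp only [if_true]; ring
  | pred k ih =>
    rw [zpow_sub_one, mul_assoc, ih, of, inv_mk_singleton, leadingExp_mk_singleton_mul]
    simp only [Bool.not_true, Bool.false_eq_true, if_false]; ring

theorem leadingExp_zpow (k : ℤ) : leadingExp j (of j ^ k) = k := by
  simpa [leadingExp_eq_zero (u := (1 : FreeGroup α)) (by simp)] using
    leadingExp_zpow_mul (j := j) k 1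

theorem exists_eq_zpow_mul (j : α) (u : FreeGroup α) :
    ∃ v : FreeGroup α, (∀ x ∈ v.toWord.head?, x.1 ≠ j) ∧ u = of j ^ leadingExp j u * v := by
  induction h : u.toWord generalizing u with
  | nil =>
    obtain rfl := toWord_eq_nil_iff.mp h
    exact ⟨1, by simp, by simp [leadingExp_eq_zero (u := (1 : FreeGroup α)) (by simp)]⟩
  | cons x L ih =>
    by_cases hx : x.1 = j
    · obtain ⟨i, b⟩ := x
      obtain rfl : i = j := hx
      have hu : u = mk [(i, b)] * mk L := by rw [mul_mk, List.singleton_append, ← h, mk_toWord]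
      have hL : (mk L).toWord = L := by
        rw [toWord_mk, IsReduced.reduce_eq]
        exact (h ▸ isReduced_toWord).infix (List.suffix_cons _ _).isInfix
      obtain ⟨v, hv, hLv⟩ := ih (mk L) hL
      refine ⟨v, hv, ?_⟩
      rw [hu, leadingExp_mk_singleton_mul, add_comm, zpow_add, mul_assoc, ← hLv,
        mk_singleton_eq_zpow]
    · exact ⟨u, by simp [h, hx], by rw [leadingExp_eq_zero (by simp [h, hx]), zpow_zero, one_mul]⟩

theorem leadingExp_mul_mk_singleton {u : FreeGroup α} {x : α × Bool}
    (h : x.1 ≠ j ∨ u ∉ Subgroup.zpowers (of j)) :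
    leadingExp j (u * mk [x]) = leadingExp j u := by
  obtain ⟨v, hv, hu⟩ := exists_eq_zpow_mul j u
  have hvx : ∀ y ∈ (v * mk [x]).toWord.head?, y.1 ≠ j := by
    by_cases hv1 : v = 1
    · subst hv1
      rcases h with h | h
      · simpa [toWord_mk] using h
      · exact absurd ⟨_, by rw [hu, mul_one]⟩ h
    · rcases head?_toWord_mul_mk_singleton hv1 x with h1 | h1
      · simp [h1]
      · rwa [h1]
  rw [hu, mul_assoc, leadingExp_zpow_mul, leadingExp_zpow_mul, leadingExp_eq_zero hvx,
    leadingExp_eq_zero hv]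

theorem abs_leadingExp_mul_mk_singleton_sub_le (u : FreeGroup α) (x : α × Bool) :
    |leadingExp j (u * mk [x]) - leadingExp j u| ≤ 1 := by
  by_cases h : x.1 ≠ j ∨ u ∉ Subgroup.zpowers (of j)
  · simp [leadingExp_mul_mk_singleton h]
  · push Not at h
    obtain ⟨hx, k, rfl⟩ := h
    obtain ⟨i, b⟩ := x
    obtain rfl : i = j := hx
    rw [mk_singleton_eq_zpow, ← zpow_add, leadingExp_zpow, leadingExp_zpow, add_sub_cancel_left]
    cases b <;> simp

end FreeGroup

namespace SemidirectProduct

variable {N G : Type*} [Group N] [Group G] {φ : G →* MulAut N}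

/-- The `N`-component of `x` in the normal form `x = inr x.right * inl (twistedLeft x)`. -/
def twistedLeft (x : N ⋊[φ] G) : N := (φ x.right)⁻¹ x.left

theorem twistedLeft_inr_mul_inl (g : G) (n : N) : twistedLeft (inr g * inl n : N ⋊[φ] G) = n := by
  simp [twistedLeft]

theorem twistedLeft_mul_inl (x : N ⋊[φ] G) (n : N) :
    twistedLeft (x * inl n) = twistedLeft x * n := by
  simp [twistedLeft]

theorem twistedLeft_mul_inr (x : N ⋊[φ] G) (g : G) :
    twistedLeft (x * inr g) = (φ g)⁻¹ (twistedLeft x) := by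
  simp [twistedLeft, mul_inv_rev]

end SemidirectProduct

open FreeGroup
  (of mk leadingExp leadingExp_mul_mk_singleton leadingExp_zpow mk_singleton_mem_zpowers)
open Subgroup SemidirectProduct

/-- Conjugation by `t` in `H`. -/
def conjT : F₂ ≃* F₂ :=
  MonoidHom.toMulEquiv
    (FreeGroup.lift fun i => if i = 0 then of 1 * of 0 else of 1)
    (FreeGroup.lift fun i => if i = 0 then (of 1)⁻¹ * of 0 else of 1)
    (by ext i; fin_cases i <;> simp)
    (by ext i; fin_cases i <;> simp)

theorem conjT_of_zero : conjT (of 0) = of 1 * of 0 := by simp [conjT]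

theorem conjT_of_one : conjT (of 1) = of 1 := by simp [conjT]

theorem conjT_mem_zpowers_iff {u : F₂} : conjT u ∈ zpowers (of 1) ↔ u ∈ zpowers (of 1) := by
  constructor
  · rintro ⟨k, hk⟩
    exact ⟨k, conjT.injective (by rw [← hk, map_zpow, conjT_of_one])⟩
  · rintro ⟨k, rfl⟩
    exact ⟨k, by rw [map_zpow, conjT_of_one]⟩

theorem conjT_mk_zero_true : conjT (mk [(0, true)]) = mk [(1, true)] * mk [(0, true)] :=
  conjT_of_zero

theorem conjT_mk_zero_false : conjT (mk [(0, false)]) = mk [(0, false)] * mk [(1, false)] := by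
  show conjT (of 0)⁻¹ = (of 0)⁻¹ * (of 1)⁻¹
  rw [map_inv, conjT_of_zero, mul_inv_rev]

theorem conjT_mk_one (b : Bool) : conjT (mk [(1, b)]) = mk [(1, b)] := by
  rw [FreeGroup.mk_singleton_eq_zpow, map_zpow, conjT_of_one]

theorem leadingExp_conjT (u : F₂) :
    leadingExp 1 (conjT u) = leadingExp 1 u ∨ leadingExp 1 (conjT u) = leadingExp 1 u + 1 := by
  rw [← FreeGroup.mk_toWord (x := u)]
  induction u.toWord using List.reverseRecOn with
  | nil => exact Or.inl rfl
  | append_singleton L x ih =>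
    rw [← FreeGroup.mul_mk]
    generalize mk L = v at ih ⊢
    by_cases hvx : v * mk [x] ∈ zpowers (of 1)
    · obtain ⟨k, hk⟩ := hvx
      rw [← hk, map_zpow, conjT_of_one]
      exact Or.inl rfl
    obtain ⟨i, b⟩ := x
    rw [map_mul]
    obtain rfl | rfl : i = 0 ∨ i = 1 := by omega
    · rw [leadingExp_mul_mk_singleton (Or.inl zero_ne_one)]
      cases b
      · have hva : conjT v * mk [(0, false)] ∉ zpowers (of 1) := fun hva =>
          hvx (conjT_mem_zpowers_iff.mp (by
            rw [map_mul, conjT_mk_zero_false, ← mul_assoc]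
            exact mul_mem hva (mk_singleton_mem_zpowers _ _)))
        rwa [conjT_mk_zero_false, ← mul_assoc, leadingExp_mul_mk_singleton (Or.inr hva),
          leadingExp_mul_mk_singleton (Or.inl zero_ne_one)]
      -- `φ (v a) = φ v * b * a`: the new `b` joins the leading run iff `φ v` is a power of `b`
      · rw [conjT_mk_zero_true, ← mul_assoc,
          leadingExp_mul_mk_singleton (Or.inl zero_ne_one)]
        by_cases hv : v ∈ zpowers (of 1)
        · obtain ⟨k, rfl⟩ := hv
          rw [map_zpow, conjT_of_one, ← FreeGroup.of, ← zpow_add_one, leadingExp_zpow,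
            leadingExp_zpow]
          exact Or.inr rfl
        · rwa [leadingExp_mul_mk_singleton (Or.inr (conjT_mem_zpowers_iff.not.mpr hv))]
    · have hv : v ∉ zpowers (of 1) := fun hv =>
        hvx (mul_mem hv (mk_singleton_mem_zpowers _ _))
      rwa [conjT_mk_one, leadingExp_mul_mk_singleton (Or.inr hv),
        leadingExp_mul_mk_singleton (Or.inr (conjT_mem_zpowers_iff.not.mpr hv))]

theorem abs_leadingExp_conjT_sub_le (u : F₂) : |leadingExp 1 (conjT u) - leadingExp 1 u| ≤ 1 := by
  rcases leadingExp_conjT u with h | h <;> rw [h] <;> simp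

theorem abs_leadingExp_conjT_symm_sub_le (u : F₂) :
    |leadingExp 1 (conjT.symm u) - leadingExp 1 u| ≤ 1 := by
  rcases leadingExp_conjT (conjT.symm u) with h | h <;>
    rw [MulEquiv.apply_symm_apply] at h <;> rw [abs_le] <;> constructor <;> omega

def conjTPow : Multiplicative ℤ →* MulAut F₂ := zpowersHom (MulAut F₂) conjT

theorem conjTPow_ofAdd_one : conjTPow (Multiplicative.ofAdd 1) = conjT := by
  simp [conjTPow]

abbrev HModel : Type := F₂ ⋊[conjTPow] Multiplicative ℤ

def modelGen : Fin 3 → HModel := ![inl (of 0), inl (of 1), inr (Multiplicative.ofAdd 1)]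

theorem lift_modelGen_hRels : ∀ r ∈ hRels, FreeGroup.lift modelGen r = 1 := by
  rintro r (rfl | rfl) <;>
    simp only [map_mul, map_inv, FreeGroup.lift_apply_of, modelGen, Matrix.cons_val]
  · rw [← map_inv (inr : Multiplicative ℤ →* HModel), ← inl_aut, conjTPow_ofAdd_one,
      conjT_of_one, ← map_inv, ← map_mul, mul_inv_cancel, map_one]
  · rw [← map_inv (inr : Multiplicative ℤ →* HModel), ← inl_aut, conjTPow_ofAdd_one,
      conjT_of_zero, ← map_inv, ← map_inv, ← map_mul, ← map_mul, mul_inv_cancel_right,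
      mul_inv_cancel, map_one]

def toModel : HGrp →* HModel := PresentedGroup.toGroup lift_modelGen_hRels

theorem toModel_aH : toModel aH = inl (of 0) := PresentedGroup.toGroup.of lift_modelGen_hRels

theorem toModel_bH : toModel bH = inl (of 1) := PresentedGroup.toGroup.of lift_modelGen_hRels

theorem toModel_tH : toModel tH = inr (Multiplicative.ofAdd 1) :=
  PresentedGroup.toGroup.of lift_modelGen_hRels

theorem toModel_ι (w : F₂) : toModel (ι w) = inl w := by
  have h : toModel.comp ι = inl := FreeGroup.ext_hom _ _ fun i => by
    fin_cases i <;> simp [ι, toModel_aH, toModel_bH]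
  exact DFunLike.congr_fun h w

theorem toModel_zpow_mul_zpow_mul_ι (p q : ℤ) (w : F₂) :
    toModel (tH ^ p * bH ^ q * ι w) = inr (Multiplicative.ofAdd 1 ^ p) * inl (of 1 ^ q * w) := by
  simp only [map_mul, map_zpow, toModel_tH, toModel_bH, toModel_ι, mul_assoc]

theorem toModel_of_mem_generators {s : HGrp}
    (hs : s ∈ ({aH, bH, tH, aH⁻¹, bH⁻¹, tH⁻¹} : Set HGrp)) :
    (∃ x, toModel s = inl (mk [x])) ∨ toModel s = inr (Multiplicative.ofAdd 1) ∨
      toModel s = inr (Multiplicative.ofAdd 1)⁻¹ := by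
  rcases hs with rfl | rfl | rfl | rfl | rfl | rfl
  · exact Or.inl ⟨(0, true), toModel_aH⟩
  · exact Or.inl ⟨(1, true), toModel_bH⟩
  · exact Or.inr (Or.inl toModel_tH)
  · refine Or.inl ⟨(0, false), ?_⟩
    rw [map_inv, toModel_aH, ← map_inv, of, FreeGroup.inv_mk_singleton, Bool.not_true]
  · refine Or.inl ⟨(1, false), ?_⟩
    rw [map_inv, toModel_bH, ← map_inv, of, FreeGroup.inv_mk_singleton, Bool.not_true]
  · exact Or.inr (Or.inr (by rw [map_inv, toModel_tH, map_inv]))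

/-- There is a map `π : H → ℤ` reading off the exponent `q` in the normal form
`t^p · b^q · ι(w)`, and `π` is 1-Lipschitz with respect to the word metric on `{a, b, t}`. -/
theorem exists_pi_lipschitz :
    ∃ π : HGrp → ℤ,
      (∀ (p q : ℤ) (w : F₂), NoLeadB w → π (tH ^ p * bH ^ q * ι w) = q) ∧
      (∀ h : HGrp, ∀ s ∈ ({aH, bH, tH, aH⁻¹, bH⁻¹, tH⁻¹} : Set HGrp),
        |π (h * s) - π h| ≤ 1) := by
  refine ⟨fun h => leadingExp 1 (twistedLeft (toModel h)), fun p q w hw => ?_, fun h s hs => ?_⟩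
  · dsimp only
    rw [toModel_zpow_mul_zpow_mul_ι, twistedLeft_inr_mul_inl, FreeGroup.leadingExp_zpow_mul,
      FreeGroup.leadingExp_eq_zero hw, add_zero]
  · dsimp only
    rcases toModel_of_mem_generators hs with ⟨x, hx⟩ | ht | ht <;> rw [map_mul]
    · rw [hx, twistedLeft_mul_inl]
      exact FreeGroup.abs_leadingExp_mul_mk_singleton_sub_le _ _
    · rw [ht, twistedLeft_mul_inr, conjTPow_ofAdd_one]
      exact abs_leadingExp_conjT_symm_sub_le _
    · rw [ht, twistedLeft_mul_inr, map_inv, inv_inv, conjTPow_ofAdd_one]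
      exact abs_leadingExp_conjT_sub_le _
end

section
/- Let V be a type, let T be a simple graph on V which is a tree (connected and acyclic), let C be a type, and let c : V → V → C be a symmetric function (c u v = c v u), regarded as a coloring of the edges of T. Then there exists a partial coloring of the vertices f : V → Option C such that for every pair of adjacent vertices u, v, exactly one of the two statements 'f u = some (c u v)' and 'f v = some (c u v)' holds; i.e. every edge of T has exactly one endpoint whose color equals the color of that edge. -/
open SimpleGraph

/-- Partial color computed along a walk: `none` at the end, and at each step the
vertex takes the color of the edge to its successor unless the successor already
has that color. -/
private def pcolor {V C : Type*} [DecidableEq C] {T : SimpleGraph V} (c : V → V → C) :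
    {u r : V} → T.Walk u r → Option C
  | _, _, .nil => none
  | u, _, .cons (v := w) _ q =>
      if pcolor c q = some (c u w) then none else some (c u w)

/-- Given a tree `T` and a symmetric coloring `c` of its edges, there is a partial
coloring `f` of the vertices (with `none` meaning uncolored) such that every edge of `T`
has exactly one endpoint whose color equals the color of the edge. -/
theorem exists_vertex_coloring_of_tree {V C : Type*} (T : SimpleGraph V) (hT : T.IsTree)
    (c : V → V → C) (hc : ∀ u v, c u v = c v u) :
    ∃ f : V → Option C, ∀ u v : V, T.Adj u v →
      Xor' (f u = some (c u v)) (f v = some (c u v)) := by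
  classical
  obtain ⟨⟨r⟩, hpath⟩ := SimpleGraph.isTree_iff_existsUnique_path.mp hT
  choose P hP hPuniq using fun v => hpath v r
  refine ⟨fun v => pcolor c (P v), ?_⟩
  intro u v huv
  have key : ∀ a b : V, ∀ h : T.Adj a b, b ∈ (P a).support →
      P a = SimpleGraph.Walk.cons h (P b) := by
    intro a b h hb
    have h1 : (P a).takeUntil b hb = SimpleGraph.Walk.cons h .nil := by
      have hpath1 : ((P a).takeUntil b hb).IsPath := (hP a).takeUntil hb
      have hpath2 : (SimpleGraph.Walk.cons h (.nil : T.Walk b b)).IsPath := by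
        simp [SimpleGraph.Walk.isPath_def, h.ne]
      have := hT.IsAcyclic.path_unique ⟨_, hpath1⟩ ⟨_, hpath2⟩
      exact congrArg Subtype.val this
    have hb' : b ∈ (P a).support := hb
    have h2 : (P a).dropUntil b hb = P b :=
      hPuniq b _ ((hP a).dropUntil hb)
    calc P a = ((P a).takeUntil b hb).append ((P a).dropUntil b hb) :=
          ((P a).take_spec hb).symm
      _ = SimpleGraph.Walk.cons h (P b) := by rw [h1, h2]; rfl
  by_cases hv : v ∈ (P u).support
  · have hPu := key u v huv hv
    have : pcolor c (P u) =
        if pcolor c (P v) = some (c u v) then none else some (c u v) := by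
      rw [hPu]; rfl
    rw [Xor']
    by_cases hcase : pcolor c (P v) = some (c u v)
    · simp [this, hcase]
    · simp [this, hcase]
  · have hu : u ∈ (P v).support := by
      by_contra hu
      have hPv : (SimpleGraph.Walk.cons huv (P v)).IsPath := (hP v).cons hu
      have := hPuniq u _ hPv
      rw [← this] at hv
      exact hv (by simp [SimpleGraph.Walk.support_cons])
    have hPv := key v u huv.symm hu
    have : pcolor c (P v) =
        if pcolor c (P u) = some (c v u) then none else some (c v u) := by
      rw [hPv]; rfl
    rw [hc u v] at *
    rw [Xor']
    by_cases hcase : pcolor c (P u) = some (c v u)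
    · simp [this, hcase]
    · simp [this, hcase]
end

section
/- Let Γ be a simple graph on a vertex type V, let u, v be adjacent vertices such that the edge {u, v} is a bridge of Γ. Then for every vertex x and every closed walk p from x to x in Γ, the number of darts of p going from u to v equals the number of darts of p going from v to u. -/
/-!
Let `S` be the set of vertices reachable from `u` once the bridge `{u, v}` is deleted. Along any
walk, the number of darts leaving `S` minus the number entering `S` only depends on whether the
endpoints lie in `S`, so on a closed walk the two numbers agree. Since `v ∉ S` and every other
edge has both ends on the same side of `S`, the only dart leaving `S` is `(u, v)` and the only
dart entering it is `(v, u)`.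
-/

namespace SimpleGraph

variable {V : Type*} {G : SimpleGraph V}

namespace Walk

theorem countP_darts_leaving_sub_entering (S : Set V) [DecidablePred (· ∈ S)] {a b : V}
    (p : G.Walk a b) :
    ((p.darts.countP fun d => d.fst ∈ S ∧ d.snd ∉ S : ℕ) : ℤ)
        - (p.darts.countP fun d => d.fst ∉ S ∧ d.snd ∈ S : ℕ) =
      S.indicator 1 a - S.indicator 1 b := by
  induction p with
  | nil => simp
  | @cons a w b _ q ih =>
    simp only [darts_cons, List.countP_cons, Set.indicator_apply] at ih ⊢
    by_cases ha : a ∈ S <;> by_cases hw : w ∈ S <;> simp [ha, hw] at ih ⊢ <;> omega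

theorem countP_darts_leaving_eq_entering (S : Set V) [DecidablePred (· ∈ S)] {a : V}
    (p : G.Walk a a) :
    (p.darts.countP fun d => d.fst ∈ S ∧ d.snd ∉ S) =
      p.darts.countP fun d => d.fst ∉ S ∧ d.snd ∈ S := by
  have := p.countP_darts_leaving_sub_entering S
  omega

end Walk

theorem Dart.reachable_deleteEdges_fst_iff_snd {e : Sym2 V} (d : G.Dart) (hd : d.edge ≠ e)
    (x : V) :
    (G.deleteEdges {e}).Reachable x d.fst ↔ (G.deleteEdges {e}).Reachable x d.snd := by
  have hadj : (G.deleteEdges {e}).Adj d.fst d.snd := (deleteEdges_adj ..).mpr ⟨d.adj, hd⟩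
  exact ⟨fun h => h.trans hadj.reachable, fun h => h.trans hadj.symm.reachable⟩

theorem IsBridge.reachable_fst_and_not_reachable_snd_iff {u v : V} (hb : G.IsBridge s(u, v))
    (d : G.Dart) :
    ((G.deleteEdges {s(u, v)}).Reachable u d.fst ∧ ¬(G.deleteEdges {s(u, v)}).Reachable u d.snd)
      ↔ d.toProd = (u, v) := by
  constructor
  · rintro ⟨hfst, hsnd⟩
    have hd : d.edge = s(u, v) := by
      by_contra hd
      exact hsnd ((d.reachable_deleteEdges_fst_iff_snd hd u).mp hfst)
    rcases Sym2.eq_iff.mp hd with ⟨h1, h2⟩ | ⟨h1, -⟩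
    · exact Prod.ext h1 h2
    · exact absurd (h1 ▸ hfst) (isBridge_iff.mp hb)
  · intro hd
    simp only [hd]
    exact ⟨.refl u, isBridge_iff.mp hb⟩

theorem IsBridge.not_reachable_fst_and_reachable_snd_iff {u v : V} (hb : G.IsBridge s(u, v))
    (d : G.Dart) :
    (¬(G.deleteEdges {s(u, v)}).Reachable u d.fst ∧ (G.deleteEdges {s(u, v)}).Reachable u d.snd)
      ↔ d.toProd = (v, u) := by
  rw [and_comm, ← Prod.swap_inj, Prod.swap_prod_mk]
  exact hb.reachable_fst_and_not_reachable_snd_iff d.symm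

end SimpleGraph

theorem closed_walk_crosses_bridge_evenly_general {V : Type*} [DecidableEq V] (Γ : SimpleGraph V)
    (u v : V) (hb : Γ.IsBridge s(u, v)) (x : V) (p : Γ.Walk x x) :
    (p.darts.filter (fun d => d.toProd = (u, v))).length =
      (p.darts.filter (fun d => d.toProd = (v, u))).length := by
  classical
  let S : Set V := {w | (Γ.deleteEdges {s(u, v)}).Reachable u w}
  simp only [← List.countP_eq_length_filter]
  calc p.darts.countP (fun d => d.toProd = (u, v))
      = p.darts.countP (fun d => d.fst ∈ S ∧ d.snd ∉ S) := List.countP_congr fun d _ => by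
        simpa [S] using (hb.reachable_fst_and_not_reachable_snd_iff d).symm
    _ = p.darts.countP (fun d => d.fst ∉ S ∧ d.snd ∈ S) :=
        p.countP_darts_leaving_eq_entering S
    _ = p.darts.countP (fun d => d.toProd = (v, u)) := List.countP_congr fun d _ => by
        simpa [S] using hb.not_reachable_fst_and_reachable_snd_iff d

/-- If `{u, v}` is a bridge of a simple graph `Γ`, then every closed walk in `Γ` crosses
the bridge the same number of times in each direction: the number of darts of the walk
going from `u` to `v` equals the number of darts going from `v` to `u`. -/
theorem closed_walk_crosses_bridge_evenly {V : Type*} [DecidableEq V] (Γ : SimpleGraph V)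
    (u v : V) (huv : Γ.Adj u v) (hb : Γ.IsBridge s(u, v)) (x : V) (p : Γ.Walk x x) :
    (p.darts.filter (fun d => d.toProd = (u, v))).length =
      (p.darts.filter (fun d => d.toProd = (v, u))).length :=
  closed_walk_crosses_bridge_evenly_general Γ u v hb x p
end

section
/- Let Γ be a simple graph on a vertex type V. Let ϕ : V × V → ℝ be a function with finite support such that ϕ (u,v) = 0 whenever u and v are not adjacent in Γ, ϕ (v,u) = −ϕ (u,v) for all u, v, and for every vertex u the (finitely supported) sum over v of ϕ (u,v) is 0. Then there exist finitely many closed walks p₁, …, p_k in Γ and nonnegative real numbers λ₁, …, λ_k such that ϕ = λ₁·flow(p₁) + ⋯ + λ_k·flow(p_k) and, moreover, (1/2)·Σ_{(u,v)} |ϕ (u,v)| = λ₁·length(p₁) + ⋯ + λ_k·length(p_k) (i.e. no cancellation occurs in the decomposition). -/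
/-!
A nonzero cycle `ϕ` has a positive entry, and by zero divergence every vertex entered by a
positive dart is left by one. Following positive darts therefore closes up a directed circuit `p`
along which `ϕ ≥ λ > 0`, with `λ` the minimum of `ϕ` on `p`. Subtracting `λ • flow(p)` leaves a
cycle with strictly smaller support, and since this subtraction never changes the sign of an
entry, `‖ϕ‖₁` drops by exactly `2λ · length(p)`. Induction on the size of the support finishes.
-/

open scoped BigOperators

/-- The flow of a closed walk `p`: it assigns to `(u, v)` the number of darts of `p`
going from `u` to `v` minus the number of darts of `p` going from `v` to `u`. -/
def walkFlow {V : Type*} [DecidableEq V] {Γ : SimpleGraph V} {x : V}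
    (p : Γ.Walk x x) : V × V → ℝ := fun uv =>
  ((p.darts.filter (fun d => d.toProd = uv)).length : ℝ) -
    ((p.darts.filter (fun d => d.toProd = (uv.2, uv.1))).length : ℝ)

open Function SimpleGraph

section

variable {V : Type*} {Γ : SimpleGraph V}

lemma Set.Finite.support_curry {α β M : Type*} [Zero M] {f : α × β → M}
    (hf : (support f).Finite) (a : α) : (support fun b => f (a, b)).Finite :=
  hf.preimage (Prod.mk_right_injective a).injOn

lemma finsum_ite_mem_eq_length {α : Type*} [BEq α] [LawfulBEq α] {l : List α} (hl : l.Nodup) :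
    ∑ᶠ a, (if a ∈ l then 1 else 0 : ℝ) = l.length := by
  classical
  rw [finsum_eq_finsetSum_of_support_subset _ (s := l.toFinset) fun a ha => by
      by_contra h; simp_all,
    Finset.sum_boole, Finset.filter_true_of_mem fun a ha => by simpa using ha,
    List.toFinset_card_of_nodup hl]

namespace SimpleGraph.Walk

def ofSeq (g : ℕ → V) (hg : ∀ i, Γ.Adj (g i) (g (i + 1))) : ∀ n, Γ.Walk (g 0) (g n)
  | 0 => nil
  | n + 1 => (ofSeq g hg n).concat (hg n)

lemma map_toProd_darts_ofSeq (g : ℕ → V) (hg : ∀ i, Γ.Adj (g i) (g (i + 1))) (n : ℕ) :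
    (ofSeq g hg n).darts.map Dart.toProd = (List.range n).map fun i => (g i, g (i + 1)) := by
  induction n with
  | zero => rfl
  | succ n ih => simp [ofSeq, darts_concat, ih, List.range_succ]

end SimpleGraph.Walk

/-- A real cellular 1-cycle of `Γ`, as an antisymmetric function on ordered pairs of vertices. -/
structure IsCirculation (Γ : SimpleGraph V) (ϕ : V × V → ℝ) : Prop where
  finite_support : (support ϕ).Finite
  eq_zero_of_not_adj : ∀ u v, ¬ Γ.Adj u v → ϕ (u, v) = 0
  antisymm : ∀ u v, ϕ (v, u) = -ϕ (u, v)
  finsum_eq_zero : ∀ u, ∑ᶠ v, ϕ (u, v) = 0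

namespace IsCirculation

variable {ϕ ψ : V × V → ℝ}

lemma apply_swap (hϕ : IsCirculation Γ ϕ) (e : V × V) : ϕ e.swap = -ϕ e :=
  hϕ.antisymm e.1 e.2

lemma adj_of_ne_zero (hϕ : IsCirculation Γ ϕ) {u v : V} (h : ϕ (u, v) ≠ 0) : Γ.Adj u v :=
  not_imp_comm.mp (hϕ.eq_zero_of_not_adj u v) h

lemma swap_notMem_of_pos (hϕ : IsCirculation Γ ϕ) {l : List (V × V)} (hl : ∀ e ∈ l, 0 < ϕ e)
    {e : V × V} (he : e ∈ l) : e.swap ∉ l := fun he' => by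
  linarith [hl _ he, hl _ he', hϕ.apply_swap e]

lemma sub_smul (hϕ : IsCirculation Γ ϕ) (hψ : IsCirculation Γ ψ) (c : ℝ) :
    IsCirculation Γ (ϕ - c • ψ) where
  finite_support := (hϕ.finite_support.union hψ.finite_support).subset <|
    (support_sub _ _).trans (Set.union_subset_union_right _ (support_const_smul_subset c ψ))
  eq_zero_of_not_adj u v h := by
    simp [hϕ.eq_zero_of_not_adj u v h, hψ.eq_zero_of_not_adj u v h]
  antisymm u v := by simp [hϕ.antisymm u v, hψ.antisymm u v]; ring
  finsum_eq_zero u := by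
    have hcψ : (support fun v => c * ψ (u, v)).Finite :=
      (hψ.finite_support.support_curry u).subset (support_const_smul_subset c _)
    simp only [Pi.sub_apply, Pi.smul_apply, smul_eq_mul]
    rw [finsum_sub_distrib (hϕ.finite_support.support_curry u) hcψ, ← mul_finsum,
      hϕ.finsum_eq_zero u, hψ.finsum_eq_zero u, mul_zero, sub_zero]

lemma exists_pos_out_of_pos_in (hϕ : IsCirculation Γ ϕ) {w u : V} (h : 0 < ϕ (w, u)) :
    ∃ v, 0 < ϕ (u, v) := by
  by_contra! hle
  have hfin := hϕ.finite_support.support_curry u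
  have hw : w ∈ hfin.toFinset := by simpa [hϕ.antisymm w u] using h.ne'
  have hneg : ∑ v ∈ hfin.toFinset, ϕ (u, v) < 0 := by
    simpa using Finset.sum_lt_sum (g := fun _ => 0) (fun v _ => hle v)
      ⟨w, hw, by linarith [hϕ.antisymm w u]⟩
  rw [← finsum_eq_finsetSum_of_support_subset _ (by simp), hϕ.finsum_eq_zero u] at hneg
  exact hneg.false

/-- Following a positive out-dart from each vertex with a positive in-dart stays in a finite set,
so it runs into a periodic orbit; one minimal period of it is a directed circuit. -/
lemma exists_closed_walk_pos (hϕ : IsCirculation Γ ϕ) {e : V × V} (he : 0 < ϕ e) :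
    ∃ (x : V) (p : Γ.Walk x x), p.darts ≠ [] ∧ (p.darts.map Dart.toProd).Nodup ∧
      ∀ d ∈ p.darts, 0 < ϕ d.toProd := by
  set S : Set V := {u | ∃ w, 0 < ϕ (w, u)}
  have hS : S.Finite := (hϕ.finite_support.image Prod.snd).subset
    fun u ⟨w, hw⟩ => ⟨(w, u), hw.ne', rfl⟩
  choose! f hf using fun u (hu : u ∈ S) => hϕ.exists_pos_out_of_pos_in hu.choose_spec
  have hmaps : Set.MapsTo f S S := fun u hu => ⟨u, hf u hu⟩
  have he2 : e.2 ∈ S := ⟨e.1, he⟩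
  obtain ⟨m, n, hmn, hrep⟩ := hS.exists_lt_map_eq_of_forall_mem (f := (f^[·] e.2))
    fun k => hmaps.iterate k he2
  set y := f^[m] e.2
  have hyS : y ∈ S := hmaps.iterate m he2
  have hy : y ∈ periodicPts f := mk_mem_periodicPts (Nat.sub_pos_of_lt hmn) <| by
    rw [IsPeriodicPt, IsFixedPt, ← iterate_add_apply, Nat.sub_add_cancel hmn.le, ← hrep]
  have hpos : ∀ i, 0 < ϕ (f^[i] y, f^[i + 1] y) := fun i => by
    rw [iterate_succ_apply']
    exact hf _ (hmaps.iterate i hyS)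
  obtain ⟨p, hdarts⟩ : ∃ p : Γ.Walk y y, p.darts.map Dart.toProd =
      (List.range (minimalPeriod f y)).map fun i => (f^[i] y, f^[i + 1] y) :=
    ⟨(Walk.ofSeq (f^[·] y) (fun i => hϕ.adj_of_ne_zero (hpos i).ne') _).copy
      (iterate_zero_apply f y) iterate_minimalPeriod,
      by rw [Walk.darts_copy, Walk.map_toProd_darts_ofSeq]⟩
  refine ⟨y, p, ?_, ?_, ?_⟩
  · have := congrArg List.length hdarts
    simp only [List.length_map, List.length_range] at this
    exact List.ne_nil_of_length_pos (this ▸ minimalPeriod_pos_of_mem_periodicPts hy)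
  · rw [hdarts]
    refine List.Nodup.map_on (fun i hi j hj hij => ?_) List.nodup_range
    exact iterate_injOn_Iio_minimalPeriod (by simpa using hi) (by simpa using hj)
      (Prod.ext_iff.mp hij).1
  · intro d hd
    have : d.toProd ∈ p.darts.map Dart.toProd := List.mem_map_of_mem hd
    rw [hdarts] at this
    obtain ⟨i, -, hi⟩ := List.mem_map.mp this
    exact hi ▸ hpos i

end IsCirculation

section DartFlow

variable [DecidableEq V]

/-- `walkFlow` for an arbitrary list of darts, so that it can be followed along open walks. -/
def dartFlow (l : List Γ.Dart) : V × V → ℝ := fun uv =>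
  ((l.filter (fun d => d.toProd = uv)).length : ℝ) -
    ((l.filter (fun d => d.toProd = uv.swap)).length : ℝ)

lemma walkFlow_eq_dartFlow {x : V} (p : Γ.Walk x x) : walkFlow p = dartFlow p.darts := rfl

@[simp] lemma dartFlow_nil : dartFlow ([] : List Γ.Dart) = 0 := by
  ext uv; simp [dartFlow]

lemma dartFlow_cons (d : Γ.Dart) (l : List Γ.Dart) (uv : V × V) :
    dartFlow (d :: l) uv =
      (if d.toProd = uv then 1 else 0) - (if d.toProd = uv.swap then 1 else 0) +
        dartFlow l uv := by
  simp only [dartFlow, List.filter_cons, decide_eq_true_eq]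
  split_ifs <;> push_cast [List.length_cons] <;> ring

lemma dartFlow_swap (l : List Γ.Dart) (uv : V × V) : dartFlow l uv.swap = -dartFlow l uv := by
  simp [dartFlow]

lemma length_filter_toProd_eq_count (l : List Γ.Dart) (uv : V × V) :
    (l.filter (fun d => d.toProd = uv)).length = (l.map Dart.toProd).count uv := by
  rw [List.count_eq_countP, List.countP_map, List.countP_eq_length_filter]
  congr! 3
  exact (beq_eq_decide _ _).symm

lemma exists_dart_of_dartFlow_ne_zero {l : List Γ.Dart} {uv : V × V} (h : dartFlow l uv ≠ 0) :
    ∃ d ∈ l, d.toProd = uv ∨ d.toProd = uv.swap := by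
  by_contra! hl
  have h₁ : l.filter (fun d => d.toProd = uv) = [] :=
    List.filter_eq_nil_iff.mpr fun d hd => by simpa using (hl d hd).1
  have h₂ : l.filter (fun d => d.toProd = uv.swap) = [] :=
    List.filter_eq_nil_iff.mpr fun d hd => by simpa using (hl d hd).2
  simp [dartFlow, h₁, h₂] at h

lemma finite_support_dartFlow (l : List Γ.Dart) : (support (dartFlow l)).Finite := by
  refine (l.finite_toSet.biUnion fun d _ => (Set.toFinite {d.toProd, d.toProd.swap})).subset ?_
  intro uv h
  obtain ⟨d, hd, h⟩ := exists_dart_of_dartFlow_ne_zero h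
  refine Set.mem_biUnion hd ?_
  rcases h with rfl | h
  · exact Set.mem_insert _ _
  · exact Set.mem_insert_of_mem _ (by rw [Set.mem_singleton_iff, h, Prod.swap_swap])

lemma finsum_ite_pair_eq (a c u : V) :
    ∑ᶠ v, (if (a, c) = (u, v) then 1 else 0 : ℝ) = if a = u then 1 else 0 := by
  rw [finsum_eq_single _ c fun v hv => if_neg fun h => hv (Prod.ext_iff.mp h).2.symm]
  simp [Prod.ext_iff]

lemma finsum_ite_pair_eq_swap (a c u : V) :
    ∑ᶠ v, (if (a, c) = (u, v).swap then 1 else 0 : ℝ) = if c = u then 1 else 0 := by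
  rw [finsum_eq_single _ a fun v hv => if_neg fun h => hv (Prod.ext_iff.mp h).1.symm]
  simp [Prod.ext_iff]

lemma finsum_dartFlow_darts {a b : V} (p : Γ.Walk a b) (u : V) :
    ∑ᶠ v, dartFlow p.darts (u, v) = (if a = u then 1 else 0) - (if b = u then 1 else 0) := by
  induction p with
  | nil => simp
  | @cons a c b h q ih =>
    have hfin (P : V → Prop) [DecidablePred P] (w : V) (hP : ∀ v, P v → v = w) :
        (support fun v => (if P v then 1 else 0 : ℝ)).Finite :=
      (Set.finite_singleton w).subset fun v hv => hP v (by by_contra h'; simp [h'] at hv)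
    have hout := hfin (fun v => (a, c) = (u, v)) c fun v hv => (Prod.ext_iff.mp hv).2.symm
    have hin := hfin (fun v => (a, c) = (u, v).swap) a fun v hv => (Prod.ext_iff.mp hv).1.symm
    simp only [Walk.darts_cons, dartFlow_cons]
    rw [finsum_add_distrib ((hout.union hin).subset (support_sub _ _))
      ((finite_support_dartFlow _).support_curry u), finsum_sub_distrib hout hin,
      finsum_ite_pair_eq, finsum_ite_pair_eq_swap, ih]
    ring

lemma isCirculation_walkFlow {x : V} (p : Γ.Walk x x) :
    IsCirculation Γ (walkFlow p) where
  finite_support := finite_support_dartFlow p.darts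
  eq_zero_of_not_adj u v h := by
    by_contra hne
    obtain ⟨⟨⟨a, b⟩, hab⟩, -, hd | hd⟩ := exists_dart_of_dartFlow_ne_zero hne
    · obtain ⟨rfl, rfl⟩ := Prod.mk.inj hd
      exact h hab
    · obtain ⟨rfl, rfl⟩ := Prod.mk.inj hd
      exact h hab.symm
  antisymm u v := dartFlow_swap p.darts (u, v)
  finsum_eq_zero u := by
    rw [walkFlow_eq_dartFlow, finsum_dartFlow_darts, sub_self]

lemma walkFlow_apply_of_nodup {x : V} {p : Γ.Walk x x} (hnd : (p.darts.map Dart.toProd).Nodup)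
    (uv : V × V) :
    walkFlow p uv = (if uv ∈ p.darts.map Dart.toProd then 1 else 0) -
      (if uv.swap ∈ p.darts.map Dart.toProd then 1 else 0) := by
  rw [walkFlow_eq_dartFlow, dartFlow, length_filter_toProd_eq_count,
    length_filter_toProd_eq_count, hnd.count, hnd.count]
  push_cast; rfl

lemma finsum_abs_walkFlow {x : V} {p : Γ.Walk x x} (hnd : (p.darts.map Dart.toProd).Nodup)
    (hrev : ∀ e ∈ p.darts.map Dart.toProd, e.swap ∉ p.darts.map Dart.toProd) :
    ∑ᶠ uv, |walkFlow p uv| = 2 * p.length := by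
  set D := p.darts.map Dart.toProd with hD
  have habs : ∀ uv,
      |walkFlow p uv| = (if uv ∈ D then 1 else 0) + (if uv.swap ∈ D then 1 else 0) := by
    intro uv
    rw [walkFlow_apply_of_nodup hnd, ← hD]
    by_cases h : uv ∈ D
    · simp only [h, hrev uv h, if_true, if_false]
      norm_num
    · by_cases h' : uv.swap ∈ D <;> simp only [h, h', if_true, if_false] <;> norm_num
  have hfin : (support fun uv => (if uv ∈ D then 1 else 0 : ℝ)).Finite :=
    D.finite_toSet.subset fun uv h => by by_contra h'; simp_all
  have hswap : ∑ᶠ uv : V × V, (if uv.swap ∈ D then 1 else 0 : ℝ) =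
      ∑ᶠ uv, (if uv ∈ D then 1 else 0) :=
    finsum_comp_equiv (Equiv.prodComm V V) (f := fun uv => if uv ∈ D then 1 else 0)
  rw [finsum_congr habs, finsum_add_distrib hfin (hfin.preimage Prod.swap_injective.injOn), hswap,
    finsum_ite_mem_eq_length hnd]
  simp [D]; ring

namespace IsCirculation

variable {ϕ : V × V → ℝ} {x : V}

/-- No cancellation: on every pair, `c • walkFlow p` has the sign of `ϕ` and at most its size. -/
lemma abs_eq_abs_sub_walkFlow_add (hϕ : IsCirculation Γ ϕ) {p : Γ.Walk x x}
    (hnd : (p.darts.map Dart.toProd).Nodup) {c : ℝ} (hc : 0 < c)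
    (hle : ∀ d ∈ p.darts, c ≤ ϕ d.toProd) (uv : V × V) :
    |ϕ uv| = |(ϕ - c • walkFlow p) uv| + c * |walkFlow p uv| := by
  have hle' : ∀ e ∈ p.darts.map Dart.toProd, c ≤ ϕ e := by simpa using hle
  have hpos : ∀ e ∈ p.darts.map Dart.toProd, 0 < ϕ e := fun e he => hc.trans_le (hle' e he)
  have hanti := hϕ.apply_swap uv
  rw [Pi.sub_apply, Pi.smul_apply, smul_eq_mul, walkFlow_apply_of_nodup hnd]
  by_cases h : uv ∈ p.darts.map Dart.toProd
  · have := hle' uv h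
    simp only [h, hϕ.swap_notMem_of_pos hpos h, if_true, if_false]
    rw [abs_of_pos (by linarith), abs_of_nonneg (by linarith)]
    norm_num
  · by_cases h' : uv.swap ∈ p.darts.map Dart.toProd
    · have := hle' _ h'
      simp only [h, h', if_true, if_false]
      rw [abs_of_neg (by linarith), abs_of_nonpos (by linarith)]
      norm_num
    · simp [h, h']

lemma finsum_abs_eq_finsum_abs_sub_walkFlow_add (hϕ : IsCirculation Γ ϕ) {p : Γ.Walk x x}
    (hnd : (p.darts.map Dart.toProd).Nodup) {c : ℝ} (hc : 0 < c)
    (hle : ∀ d ∈ p.darts, c ≤ ϕ d.toProd) :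
    ∑ᶠ uv, |ϕ uv| = ∑ᶠ uv, |(ϕ - c • walkFlow p) uv| + c * (2 * p.length) := by
  have hpos : ∀ e ∈ p.darts.map Dart.toProd, 0 < ϕ e := by
    simpa using fun d hd => hc.trans_le (hle d hd)
  have hfin : ∀ {f : V × V → ℝ}, IsCirculation Γ f → (support fun uv => |f uv|).Finite :=
    fun hf => hf.finite_support.subset fun uv h => abs_ne_zero.mp h
  rw [finsum_congr (hϕ.abs_eq_abs_sub_walkFlow_add hnd hc hle),
    finsum_add_distrib (hfin (hϕ.sub_smul (isCirculation_walkFlow p) c))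
      ((hfin (isCirculation_walkFlow p)).subset fun uv h => right_ne_zero_of_mul h),
    ← mul_finsum, finsum_abs_walkFlow hnd fun e he => hϕ.swap_notMem_of_pos hpos he]

lemma support_sub_walkFlow_ssubset (hϕ : IsCirculation Γ ϕ) {p : Γ.Walk x x}
    (hnd : (p.darts.map Dart.toProd).Nodup) {d₀ : Γ.Dart} (hd₀ : d₀ ∈ p.darts)
    (hpos : 0 < ϕ d₀.toProd) (hmin : ∀ d ∈ p.darts, ϕ d₀.toProd ≤ ϕ d.toProd) :
    support (ϕ - ϕ d₀.toProd • walkFlow p) ⊂ support ϕ := by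
  have habs := hϕ.abs_eq_abs_sub_walkFlow_add hnd hpos hmin
  refine Set.ssubset_iff_of_subset (fun uv h => ?_) |>.mpr ⟨d₀.toProd, hpos.ne', ?_⟩
  · rw [Function.mem_support, ← abs_pos, habs uv]
    exact add_pos_of_pos_of_nonneg (abs_pos.mpr h) (by positivity)
  · have hflow : walkFlow p d₀.toProd = 1 := by
      have hmem := List.mem_map_of_mem (f := Dart.toProd) hd₀
      rw [walkFlow_apply_of_nodup hnd, if_pos hmem, if_neg (hϕ.swap_notMem_of_pos
        (by simpa using fun d hd => hpos.trans_le (hmin d hd)) hmem)]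
      norm_num
    simp [hflow]

end IsCirculation

end DartFlow

section Decomposition

variable [DecidableEq V]

def HasCircuitDecomposition (Γ : SimpleGraph V) (ϕ : V × V → ℝ) : Prop :=
  ∃ (k : ℕ) (x : Fin k → V) (p : ∀ i : Fin k, Γ.Walk (x i) (x i)) (lam : Fin k → ℝ),
    (∀ i, 0 ≤ lam i) ∧ (∀ uv, ϕ uv = ∑ i, lam i * walkFlow (p i) uv) ∧
    (1 / 2) * ∑ᶠ uv, |ϕ uv| = ∑ i, lam i * ((p i).length : ℝ)

lemma hasCircuitDecomposition_zero : HasCircuitDecomposition Γ 0 :=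
  ⟨0, Fin.elim0, fun i => i.elim0, Fin.elim0, fun i => i.elim0, by simp, by simp⟩

lemma HasCircuitDecomposition.of_sub_smul_walkFlow {ϕ : V × V → ℝ} {x : V} {p : Γ.Walk x x}
    {c : ℝ} (h : HasCircuitDecomposition Γ (ϕ - c • walkFlow p)) (hc : 0 ≤ c)
    (hnorm : ∑ᶠ uv, |ϕ uv| = ∑ᶠ uv, |(ϕ - c • walkFlow p) uv| + c * (2 * p.length)) :
    HasCircuitDecomposition Γ ϕ := by
  obtain ⟨k, y, q, lam, hlam, hsum, hlen⟩ := h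
  let z : Fin (k + 1) → V := Fin.cons x y
  refine ⟨k + 1, z, Fin.cons (α := fun i => Γ.Walk (z i) (z i)) p q, Fin.cons c lam,
    Fin.cases hc hlam, fun uv => ?_, ?_⟩
  · rw [Fin.sum_univ_succ]
    change ϕ uv = c * walkFlow p uv + ∑ i, lam i * walkFlow (q i) uv
    rw [← hsum uv, Pi.sub_apply, Pi.smul_apply, smul_eq_mul]
    ring
  · rw [Fin.sum_univ_succ]
    change _ = c * (p.length : ℝ) + ∑ i, lam i * ((q i).length : ℝ)
    rw [← hlen, hnorm]
    ring

theorem IsCirculation.hasCircuitDecomposition {ϕ : V × V → ℝ} (hϕ : IsCirculation Γ ϕ) :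
    HasCircuitDecomposition Γ ϕ := by
  induction hn : (support ϕ).ncard using Nat.strong_induction_on generalizing ϕ with
  | _ n ih =>
  by_cases hpos : ∃ e, 0 < ϕ e
  · obtain ⟨e, he⟩ := hpos
    obtain ⟨x, p, hne, hnd, hdpos⟩ := hϕ.exists_closed_walk_pos he
    obtain ⟨d₀, hd₀, hmin⟩ := p.darts.toFinset.exists_min_image (ϕ ∘ Dart.toProd)
      (List.toFinset_nonempty_iff _ |>.mpr hne)
    simp only [List.mem_toFinset, comp_apply] at hd₀ hmin
    have hc := hdpos d₀ hd₀
    have hlt : (support (ϕ - ϕ d₀.toProd • walkFlow p)).ncard < n :=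
      hn ▸ Set.ncard_lt_ncard (hϕ.support_sub_walkFlow_ssubset hnd hd₀ hc hmin) hϕ.finite_support
    exact (ih _ hlt (hϕ.sub_smul (isCirculation_walkFlow p) _) rfl).of_sub_smul_walkFlow hc.le
      (hϕ.finsum_abs_eq_finsum_abs_sub_walkFlow_add hnd hc hmin)
  · simp only [not_exists, not_lt] at hpos
    have : ϕ = 0 := funext fun e => (hpos e).antisymm <| by
      simpa [hϕ.apply_swap e] using hpos e.swap
    exact this ▸ hasCircuitDecomposition_zero

end Decomposition

end

/-- Every real cellular 1-cycle on a simple graph (a finitely supported, antisymmetric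
function on pairs of vertices, supported on edges and with zero divergence at every
vertex) is a nonnegative linear combination of flows of closed walks, with no
cancellation: half the ℓ¹-norm of the cycle equals the weighted sum of the lengths of
the walks. -/
theorem cycle_decomposition_into_circuits {V : Type*} [DecidableEq V] (Γ : SimpleGraph V)
    (ϕ : V × V → ℝ) (hfin : (Function.support ϕ).Finite)
    (hadj : ∀ u v : V, ¬ Γ.Adj u v → ϕ (u, v) = 0)
    (hskew : ∀ u v : V, ϕ (v, u) = -ϕ (u, v))
    (hdiv : ∀ u : V, ∑ᶠ v : V, ϕ (u, v) = 0) :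
    ∃ (k : ℕ) (x : Fin k → V) (p : ∀ i : Fin k, Γ.Walk (x i) (x i)) (lam : Fin k → ℝ),
      (∀ i : Fin k, 0 ≤ lam i) ∧
      (∀ uv : V × V, ϕ uv = ∑ i : Fin k, lam i * walkFlow (p i) uv) ∧
      (1 / 2) * ∑ᶠ uv : V × V, |ϕ uv| = ∑ i : Fin k, lam i * ((p i).length : ℝ) :=
  (IsCirculation.mk hfin hadj hskew hdiv).hasCircuitDecomposition
end
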